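/- arXiv:2212.02369 — 6 statements merged into one kernel-verified Lean document; each statement's English description precedes it below -/
import Mathlib

section
/- The triangle map preserves partition size: for any partition λ = (λ₁,...,λ_m)×[k₁,...,k_m] of n with m ≥ 2 and λ₁ < λ₂ + λ_m, the tuple T₀(λ) = (λ₂,λ₃,...,λ_m, λ₁−λ₂)×[k₁+k₂, k₃,...,k_m, k₁] is again a partition of n. -/
/-- A partition `(λ₁,...,λ_m)×[k₁,...,k_m]`: strictly decreasing positive parts
with positive multiplicities, same length. -/
def IsPart (p : List ℕ × List ℕ) : Prop :=
  p.1.length = p.2.length ∧ List.Chain' (· > ·) p.1 ∧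
  (∀ x ∈ p.1, 0 < x) ∧ (∀ x ∈ p.2, 0 < x)

/-- size of a partition: Σ kᵢ λᵢ -/
def psize (p : List ℕ × List ℕ) : ℕ := (List.zipWith (· * ·) p.1 p.2).sum

def parts1 (L : List ℕ) : ℕ := L.headD 0      -- λ₁
def parts2 (L : List ℕ) : ℕ := L.tail.headD 0 -- λ₂
def parts3 (L : List ℕ) : ℕ := L.tail.tail.headD 0 -- λ₃
def partsLast (L : List ℕ) : ℕ := L.getLastD 0 -- λ_m
def partsPrelast (L : List ℕ) : ℕ := L.dropLast.getLastD 0 -- λ_{m-1}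

def T0parts : List ℕ → List ℕ
  | a :: b :: t => b :: (t ++ [a - b])
  | l => l

def T0mults : List ℕ → List ℕ
  | a :: b :: t => (a + b) :: (t ++ [a])
  | l => l

def T1parts (L : List ℕ) : List ℕ := (parts1 L - partsLast L) :: L.tail

def T1mults (K : List ℕ) : List ℕ := K.dropLast ++ [K.headD 0 + K.getLastD 0]

def TDparts (L : List ℕ) : List ℕ := L.tail

def TDmults : List ℕ → List ℕ
  | [a, b] => [2 * a + b]
  | a :: b :: t => (a + b) :: (t.dropLast ++ [a + t.getLastD 0])
  | l => l

def T0map (p : List ℕ × List ℕ) : List ℕ × List ℕ := (T0parts p.1, T0mults p.2)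
def T1map (p : List ℕ × List ℕ) : List ℕ × List ℕ := (T1parts p.1, T1mults p.2)

/-- △₀ : partitions of dimension ≥ 2 with λ₁ < λ₂ + λ_m -/
def Tri0 : Set (List ℕ × List ℕ) :=
  {p | IsPart p ∧ 2 ≤ p.1.length ∧ parts1 p.1 < parts2 p.1 + partsLast p.1}

/-- △₁ : partitions of dimension ≥ 2 with λ₁ > λ₂ + λ_m -/
def Tri1 : Set (List ℕ × List ℕ) :=
  {p | IsPart p ∧ 2 ≤ p.1.length ∧ parts2 p.1 + partsLast p.1 < parts1 p.1}

/-- M₀ : partitions of dimension ≥ 2 with k₁ > k_m -/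
def M0 : Set (List ℕ × List ℕ) :=
  {p | IsPart p ∧ 2 ≤ p.1.length ∧ p.2.getLastD 0 < p.2.headD 0}

/-- M₁ : partitions of dimension ≥ 2 with k₁ < k_m -/
def M1 : Set (List ℕ × List ℕ) :=
  {p | IsPart p ∧ 2 ≤ p.1.length ∧ p.2.headD 0 < p.2.getLastD 0}

/-- △_d^G : partitions with λ₂ + dλ_m < λ₁ < λ₂ + (d+1)λ_m -/
def GaussSet (d : ℕ) : Set (List ℕ × List ℕ) :=
  {p | IsPart p ∧ 2 ≤ p.1.length ∧
    parts2 p.1 + d * partsLast p.1 < parts1 p.1 ∧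
    parts1 p.1 < parts2 p.1 + (d + 1) * partsLast p.1}

/-
`T₀` moves `λ₁` to the end as the new smallest part `λ₁ - λ₂`, which is positive because
`λ₂ < λ₁` and smaller than `λ_m` exactly because `λ₁ < λ₂ + λ_m`. The size is unchanged since
`λ₂ (k₁ + k₂) + (λ₁ - λ₂) k₁ = λ₁ k₁ + λ₂ k₂`.
-/

theorem length_T0parts (L : List ℕ) : (T0parts L).length = L.length := by
  match L with
  | _ :: _ :: _ => simp [T0parts]
  | [_] | [] => rfl

theorem length_T0mults (K : List ℕ) : (T0mults K).length = K.length := by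
  match K with
  | _ :: _ :: _ => simp [T0mults]
  | [_] | [] => rfl

theorem isChain_T0parts {L : List ℕ} (hL : L.IsChain (· > ·))
    (h0 : parts1 L < parts2 L + partsLast L) : (T0parts L).IsChain (· > ·) := by
  match L, hL with
  | a :: b :: t, hL =>
    have hlast : (b :: t).getLast? = some (partsLast (a :: b :: t)) := by
      simp [partsLast, List.getLastD_eq_getLast?, List.getLast?_eq_some_getLast]
    have hba : b < a := hL.rel
    simp only [parts1, parts2, List.headD_cons, List.tail_cons] at h0
    refine hL.tail.append (.singleton _) fun x hx y hy => ?_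
    rw [List.tail_cons, hlast, Option.mem_some_iff] at hx
    rw [List.head?_cons, Option.mem_some_iff] at hy
    omega
  | [_], hL | [], hL => exact hL

theorem pos_of_mem_T0parts {L : List ℕ} (hL : L.IsChain (· > ·)) (hpos : ∀ x ∈ L, 0 < x) :
    ∀ x ∈ T0parts L, 0 < x := by
  match L, hL with
  | a :: b :: t, hL =>
    have hba : b < a := hL.rel
    simp only [T0parts, List.mem_cons, List.mem_append, List.not_mem_nil, or_false]
    rintro x (rfl | hx | rfl)
    · exact hpos x (by simp)
    · exact hpos x (by simp [hx])
    · omega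
  | [_], _ | [], _ => exact hpos

theorem pos_of_mem_T0mults {K : List ℕ} (hpos : ∀ x ∈ K, 0 < x) :
    ∀ x ∈ T0mults K, 0 < x := by
  match K with
  | c :: d :: s =>
    have hc : 0 < c := hpos c (by simp)
    simp only [T0mults, List.mem_cons, List.mem_append, List.not_mem_nil, or_false]
    rintro x (rfl | hx | rfl)
    · omega
    · exact hpos x (by simp [hx])
    · exact hc
  | [_] | [] => exact hpos

theorem psize_T0 {L K : List ℕ} (hlen : L.length = K.length) (hL : L.IsChain (· > ·)) :
    psize (T0parts L, T0mults K) = psize (L, K) := by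
  match L, K, hlen, hL with
  | a :: b :: t, c :: d :: s, hlen, hL =>
    have hba : b ≤ a := le_of_lt hL.rel
    simp only [List.length_cons, Nat.add_right_cancel_iff] at hlen
    simp only [psize, T0parts, T0mults, List.zipWith_cons_cons, List.zipWith_append hlen,
      List.sum_cons, List.sum_append, List.zipWith_nil_right, List.sum_nil]
    have hhead : b * (c + d) + (a - b) * c = a * c + b * d := by
      have hbc : b * c ≤ a * c := Nat.mul_le_mul_right c hba
      rw [Nat.sub_mul, Nat.mul_add]
      omega
    omega
  | [], [], _, _ | [_], [_], _, _ => rfl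

theorem isPart_T0 {L K : List ℕ} (hP : IsPart (L, K))
    (h0 : parts1 L < parts2 L + partsLast L) : IsPart (T0parts L, T0mults K) := by
  obtain ⟨hlen, hchain, hposL, hposK⟩ := hP
  exact ⟨by simpa [length_T0parts, length_T0mults] using hlen,
    isChain_T0parts hchain h0, pos_of_mem_T0parts hchain hposL, pos_of_mem_T0mults hposK⟩

theorem stmt0_general (n : ℕ) (L K : List ℕ) (hP : IsPart (L, K))
    (hn : psize (L, K) = n) (h0 : parts1 L < parts2 L + partsLast L) :
    IsPart (T0parts L, T0mults K) ∧ psize (T0parts L, T0mults K) = n :=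
  ⟨isPart_T0 hP h0, hn ▸ psize_T0 hP.1 hP.2.1⟩

theorem stmt0 (n : ℕ) (L K : List ℕ) (hP : IsPart (L, K)) (hm : 2 ≤ L.length)
    (hn : psize (L, K) = n) (h0 : parts1 L < parts2 L + partsLast L) :
    IsPart (T0parts L, T0mults K) ∧ psize (T0parts L, T0mults K) = n :=
  stmt0_general n L K hP hn h0
end

section
/- The map T₀ is a bijection from △₀ (partitions of dimension ≥ 2 with λ₁ < λ₂ + λ_m) onto M₀ (partitions of dimension ≥ 2 with k₁ > k_m), and this bijection preserves the size of the partition. -/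
lemma isPart_iff (L K : List ℕ) :
    IsPart (L, K) ↔ L.length = K.length ∧ L.IsChain (· > ·) ∧
      (∀ x ∈ L, 0 < x) ∧ (∀ x ∈ K, 0 < x) :=
  Iff.rfl

lemma List.exists_cons_cons_of_two_le_length {α : Type*} {l : List α} (h : 2 ≤ l.length) :
    ∃ a b t, l = a :: b :: t := by
  match l, h with
  | a :: b :: t, _ => exact ⟨a, b, t, rfl⟩

lemma List.exists_cons_append_singleton_of_two_le_length {α : Type*} {l : List α}
    (h : 2 ≤ l.length) : ∃ a t b, l = a :: (t ++ [b]) := by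
  obtain ⟨a, b, t, rfl⟩ := List.exists_cons_cons_of_two_le_length h
  exact ⟨a, (b :: t).dropLast, (b :: t).getLast (List.cons_ne_nil b t),
    by rw [List.dropLast_append_getLast]⟩

lemma List.isChain_cons_append_singleton {α : Type*} {R : α → α → Prop} {b c : α}
    {t : List α} : (b :: (t ++ [c])).IsChain R ↔ (b :: t).IsChain R ∧ R (t.getLastD b) c := by
  rw [← List.cons_append, List.isChain_append]
  simp [List.getLast?_cons]

lemma IsPart.exists_cons_cons {p : List ℕ × List ℕ} (hp : IsPart p) (hm : 2 ≤ p.1.length) :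
    ∃ a b t k₁ k₂ s, p = (a :: b :: t, k₁ :: k₂ :: s) := by
  obtain ⟨L, K⟩ := p
  obtain ⟨a, b, t, rfl⟩ := List.exists_cons_cons_of_two_le_length hm
  obtain ⟨k₁, k₂, s, rfl⟩ := List.exists_cons_cons_of_two_le_length (hp.1 ▸ hm)
  exact ⟨a, b, t, k₁, k₂, s, rfl⟩

lemma IsPart.exists_cons_append_singleton {p : List ℕ × List ℕ} (hp : IsPart p)
    (hm : 2 ≤ p.1.length) : ∃ b t c k s k', p = (b :: (t ++ [c]), k :: (s ++ [k'])) := by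
  obtain ⟨L, K⟩ := p
  obtain ⟨b, t, c, rfl⟩ := List.exists_cons_append_singleton_of_two_le_length hm
  obtain ⟨k, s, k', rfl⟩ := List.exists_cons_append_singleton_of_two_le_length (hp.1 ▸ hm)
  exact ⟨b, t, c, k, s, k', rfl⟩

def T0invMap (q : List ℕ × List ℕ) : List ℕ × List ℕ :=
  ((parts1 q.1 + partsLast q.1) :: q.1.dropLast,
    q.2.getLastD 0 :: (q.2.headD 0 - q.2.getLastD 0) :: q.2.tail.dropLast)

lemma T0map_cons_cons (a b : ℕ) (t : List ℕ) (k₁ k₂ : ℕ) (s : List ℕ) :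
    T0map (a :: b :: t, k₁ :: k₂ :: s) = (b :: (t ++ [a - b]), (k₁ + k₂) :: (s ++ [k₁])) :=
  rfl

lemma T0invMap_cons_append_singleton (b : ℕ) (t : List ℕ) (c k : ℕ) (s : List ℕ) (k' : ℕ) :
    T0invMap (b :: (t ++ [c]), k :: (s ++ [k'])) = ((b + c) :: b :: t, k' :: (k - k') :: s) := by
  simp only [T0invMap, parts1, partsLast, List.headD_cons, List.getLastD_cons,
    List.getLastD_concat, List.tail_cons, List.dropLast_concat]
  rw [← List.cons_append, List.dropLast_concat]

lemma mapsTo_T0map : Set.MapsTo T0map Tri0 M0 := by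
  rintro p ⟨hp, hm, hlt⟩
  obtain ⟨a, b, t, k₁, k₂, s, rfl⟩ := hp.exists_cons_cons hm
  obtain ⟨hlen, hchain, hL, hK⟩ := (isPart_iff _ _).1 hp
  simp only [parts1, parts2, partsLast, List.headD_cons, List.tail_cons,
    List.getLastD_cons] at hlt
  rw [List.isChain_cons_cons] at hchain
  have hba : b < a := hchain.1
  have hk₂ : 0 < k₂ := hK k₂ (by simp)
  rw [T0map_cons_cons]
  refine ⟨(isPart_iff _ _).2 ⟨?_, ?_, ?_, ?_⟩, by simp, ?_⟩
  · simpa using hlen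
  · exact List.isChain_cons_append_singleton.2 ⟨hchain.2, by omega⟩
  · intro x hx
    simp only [List.mem_cons, List.mem_append, List.not_mem_nil, or_false] at hx
    rcases hx with rfl | hx | rfl
    · exact hL _ (by simp)
    · exact hL _ (by simp [hx])
    · omega
  · intro x hx
    simp only [List.mem_cons, List.mem_append, List.not_mem_nil, or_false] at hx
    rcases hx with rfl | hx | rfl
    · omega
    · exact hK _ (by simp [hx])
    · exact hK _ (by simp)
  · simp only [List.getLastD_cons, List.getLastD_concat, List.headD_cons]
    omega

lemma mapsTo_T0invMap : Set.MapsTo T0invMap M0 Tri0 := by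
  rintro q ⟨hq, hm, hlt⟩
  obtain ⟨b, t, c, k, s, k', rfl⟩ := hq.exists_cons_append_singleton hm
  obtain ⟨hlen, hchain, hL, hK⟩ := (isPart_iff _ _).1 hq
  simp only [List.getLastD_cons, List.getLastD_concat, List.headD_cons] at hlt
  rw [List.isChain_cons_append_singleton] at hchain
  have hc : 0 < c := hL c (by simp)
  rw [T0invMap_cons_append_singleton]
  refine ⟨(isPart_iff _ _).2 ⟨?_, ?_, ?_, ?_⟩, by simp, ?_⟩
  · simpa using hlen
  · exact List.isChain_cons_cons.2 ⟨by omega, hchain.1⟩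
  · intro x hx
    rw [List.mem_cons] at hx
    rcases hx with rfl | hx
    · omega
    · exact hL _ (List.mem_append_left _ hx)
  · intro x hx
    simp only [List.mem_cons] at hx
    rcases hx with rfl | rfl | hx
    · exact hK _ (by simp)
    · omega
    · exact hK _ (by simp [hx])
  · simp only [parts1, parts2, partsLast, List.headD_cons, List.tail_cons, List.getLastD_cons]
    omega

lemma leftInvOn_T0invMap : Set.LeftInvOn T0invMap T0map Tri0 := by
  rintro p ⟨hp, hm, -⟩
  obtain ⟨a, b, t, k₁, k₂, s, rfl⟩ := hp.exists_cons_cons hm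
  have hba : b < a := (List.isChain_cons_cons.1 ((isPart_iff _ _).1 hp).2.1).1
  rw [T0map_cons_cons, T0invMap_cons_append_singleton, Nat.add_sub_of_le hba.le,
    Nat.add_sub_cancel_left]

lemma rightInvOn_T0invMap : Set.RightInvOn T0invMap T0map M0 := by
  rintro q ⟨hq, hm, hlt⟩
  obtain ⟨b, t, c, k, s, k', rfl⟩ := hq.exists_cons_append_singleton hm
  simp only [List.getLastD_cons, List.getLastD_concat, List.headD_cons] at hlt
  rw [T0invMap_cons_append_singleton, T0map_cons_cons, Nat.add_sub_cancel_left,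
    Nat.add_sub_of_le hlt.le]

lemma psize_T0map_cons_cons {a b : ℕ} {t : List ℕ} (k₁ k₂ : ℕ) {s : List ℕ} (hba : b ≤ a)
    (hts : t.length = s.length) :
    psize (T0map (a :: b :: t, k₁ :: k₂ :: s)) = psize (a :: b :: t, k₁ :: k₂ :: s) := by
  obtain ⟨d, rfl⟩ := Nat.exists_eq_add_of_le hba
  simp only [T0map_cons_cons, psize, List.zipWith_cons_cons, List.zipWith_append hts,
    List.sum_append, List.sum_cons, List.zipWith_nil_left, List.sum_nil, Nat.add_sub_cancel_left]
  ring

lemma psize_T0map_of_mem_Tri0 {p : List ℕ × List ℕ} (hp : p ∈ Tri0) :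
    psize (T0map p) = psize p := by
  obtain ⟨hp, hm, -⟩ := hp
  obtain ⟨a, b, t, k₁, k₂, s, rfl⟩ := hp.exists_cons_cons hm
  obtain ⟨hlen, hchain, -, -⟩ := (isPart_iff _ _).1 hp
  exact psize_T0map_cons_cons k₁ k₂ (List.isChain_cons_cons.1 hchain).1.le
    (by simpa using hlen)

theorem stmt3 : Set.BijOn T0map Tri0 M0 ∧ ∀ p ∈ Tri0, psize (T0map p) = psize p :=
  ⟨Set.InvOn.bijOn ⟨leftInvOn_T0invMap, rightInvOn_T0invMap⟩ mapsTo_T0map mapsTo_T0invMap,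
    fun _ => psize_T0map_of_mem_Tri0⟩
end

section
/- The map T₁ is a bijection from △₁ (partitions of dimension ≥ 2 with λ₁ > λ₂ + λ_m) onto M₁ (partitions of dimension ≥ 2 with k₁ < k_m), and this bijection preserves the size of the partition. -/
/-!
Write a partition of dimension at least two as `(a, λ₂, …, λ_{m-1}, b) × [k, k₂, …, k_{m-1}, c]`.
Then `T₁` only replaces `a` by `a - b` and `c` by `k + c`, and `T₁⁻¹` undoes this. The defining
inequality `λ₂ + b < a` of `△₁` is exactly what keeps `a - b` above `λ₂`, and `k < c` is exactly
what keeps `c - k` positive, so the two maps exchange `△₁` and `M₁`. The size changes by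
`-bk + bk = 0`.
-/

open List Set

lemma List.exists_eq_cons_append_singleton {α : Type*} {l : List α} (hl : 2 ≤ l.length) :
    ∃ a u b, l = a :: (u ++ [b]) := by
  obtain ⟨a, t, rfl⟩ := exists_cons_of_length_pos (by omega : 0 < l.length)
  obtain ⟨u, b, rfl⟩ := t.eq_nil_or_concat'.resolve_left (by rintro rfl; simp at hl)
  exact ⟨a, u, b, rfl⟩

@[simp]
lemma List.getLastD_cons_append_singleton {α : Type*} (a b d : α) (u : List α) :
    (a :: (u ++ [b])).getLastD d = b := by
  rw [← cons_append, getLastD_concat]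

@[simp]
lemma List.dropLast_cons_append_singleton {α : Type*} (a b : α) (u : List α) :
    (a :: (u ++ [b])).dropLast = a :: u := by
  rw [← cons_append, dropLast_concat]

lemma isChain_gt_cons_iff {a : ℕ} {l : List ℕ} (hl : l ≠ []) :
    IsChain (· > ·) (a :: l) ↔ l.headD 0 < a ∧ IsChain (· > ·) l := by
  cases l with
  | nil => exact absurd rfl hl
  | cons b l => simp [isChain_cons_cons]

def T1inv (p : List ℕ × List ℕ) : List ℕ × List ℕ :=
  ((parts1 p.1 + partsLast p.1) :: p.1.tail, p.2.dropLast ++ [p.2.getLastD 0 - p.2.headD 0])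

lemma IsPart.exists_eq_cons_append_singleton {p : List ℕ × List ℕ} (hp : IsPart p)
    (h2 : 2 ≤ p.1.length) :
    ∃ a u b k v c, p = (a :: (u ++ [b]), k :: (v ++ [c])) ∧ u.length = v.length := by
  obtain ⟨a, u, b, hL⟩ := List.exists_eq_cons_append_singleton h2
  obtain ⟨k, v, c, hK⟩ := List.exists_eq_cons_append_singleton (hp.1 ▸ h2)
  refine ⟨a, u, b, k, v, c, Prod.ext hL hK, ?_⟩
  simpa [hL, hK] using hp.1

section Decomposed

variable {a b k c : ℕ} {u v : List ℕ}

lemma IsPart.update_first_part_last_mult {a' c' : ℕ}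
    (hp : IsPart (a :: (u ++ [b]), k :: (v ++ [c])))
    (ha' : (u ++ [b]).headD 0 < a') (hc' : 0 < c') :
    IsPart (a' :: (u ++ [b]), k :: (v ++ [c'])) := by
  obtain ⟨hlen, hchain : IsChain _ (a :: (u ++ [b])), hparts, hmults⟩ := hp
  rw [isChain_gt_cons_iff (by simp)] at hchain
  refine ⟨by simpa using hlen, (isChain_gt_cons_iff (by simp)).2 ⟨ha', hchain.2⟩, ?_, ?_⟩
  · simp only [forall_mem_cons] at hparts ⊢
    exact ⟨by omega, hparts.2⟩
  · simp only [forall_mem_cons, forall_mem_append] at hmults ⊢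
    exact ⟨hmults.1, hmults.2.1, hc', hmults.2.2.2⟩

lemma mem_Tri1_iff :
    (a :: (u ++ [b]), k :: (v ++ [c])) ∈ Tri1 ↔
      IsPart (a :: (u ++ [b]), k :: (v ++ [c])) ∧ (u ++ [b]).headD 0 + b < a := by
  simp only [Tri1, parts1, parts2, partsLast, mem_ofPred_eq, headD_cons, tail_cons,
    getLastD_cons_append_singleton]
  exact and_congr_right fun _ => and_iff_right (by simp)

lemma mem_M1_iff :
    (a :: (u ++ [b]), k :: (v ++ [c])) ∈ M1 ↔
      IsPart (a :: (u ++ [b]), k :: (v ++ [c])) ∧ k < c := by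
  simp only [M1, mem_ofPred_eq, headD_cons, getLastD_cons_append_singleton]
  exact and_congr_right fun _ => and_iff_right (by simp)

lemma T1map_cons_append_singleton :
    T1map (a :: (u ++ [b]), k :: (v ++ [c])) = ((a - b) :: (u ++ [b]), k :: (v ++ [k + c])) := by
  simp only [T1map, T1parts, T1mults, parts1, partsLast, headD_cons, tail_cons,
    getLastD_cons_append_singleton, dropLast_cons_append_singleton, cons_append]

lemma T1inv_cons_append_singleton :
    T1inv (a :: (u ++ [b]), k :: (v ++ [c])) = ((a + b) :: (u ++ [b]), k :: (v ++ [c - k])) := by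
  simp only [T1inv, parts1, partsLast, headD_cons, tail_cons,
    getLastD_cons_append_singleton, dropLast_cons_append_singleton, cons_append]

lemma psize_cons_append_singleton (h : u.length = v.length) :
    psize (a :: (u ++ [b]), k :: (v ++ [c])) = a * k + (zipWith (· * ·) u v).sum + b * c := by
  simp [psize, zipWith_append h, add_assoc]

end Decomposed

lemma mapsTo_T1map_Tri1_M1 : MapsTo T1map Tri1 M1 := by
  rintro p hp
  obtain ⟨a, u, b, k, v, c, rfl, -⟩ := hp.1.exists_eq_cons_append_singleton hp.2.1
  obtain ⟨hpart, hlt⟩ := mem_Tri1_iff.1 hp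
  have hc : 0 < c := hpart.2.2.2 c (by simp)
  rw [T1map_cons_append_singleton, mem_M1_iff]
  exact ⟨hpart.update_first_part_last_mult (a' := a - b) (c' := k + c) (by omega) (by omega),
    by omega⟩

lemma mapsTo_T1inv_M1_Tri1 : MapsTo T1inv M1 Tri1 := by
  rintro p hp
  obtain ⟨a, u, b, k, v, c, rfl, -⟩ := hp.1.exists_eq_cons_append_singleton hp.2.1
  obtain ⟨hpart, hlt⟩ := mem_M1_iff.1 hp
  have hhead : (u ++ [b]).headD 0 < a := ((isChain_gt_cons_iff (by simp)).1 hpart.2.1).1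
  rw [T1inv_cons_append_singleton, mem_Tri1_iff]
  exact ⟨hpart.update_first_part_last_mult (a' := a + b) (c' := c - k) (by omega) (by omega),
    by omega⟩

lemma leftInvOn_T1inv_T1map : LeftInvOn T1inv T1map Tri1 := by
  rintro p hp
  obtain ⟨a, u, b, k, v, c, rfl, -⟩ := hp.1.exists_eq_cons_append_singleton hp.2.1
  have hba : b < a := by have := (mem_Tri1_iff.1 hp).2; omega
  rw [T1map_cons_append_singleton, T1inv_cons_append_singleton, Nat.sub_add_cancel hba.le,
    Nat.add_sub_cancel_left]

lemma rightInvOn_T1inv_T1map : RightInvOn T1inv T1map M1 := by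
  rintro p hp
  obtain ⟨a, u, b, k, v, c, rfl, -⟩ := hp.1.exists_eq_cons_append_singleton hp.2.1
  rw [T1inv_cons_append_singleton, T1map_cons_append_singleton, Nat.add_sub_cancel,
    Nat.add_sub_cancel' (mem_M1_iff.1 hp).2.le]

lemma psize_T1map {p : List ℕ × List ℕ} (hp : p ∈ Tri1) : psize (T1map p) = psize p := by
  obtain ⟨a, u, b, k, v, c, rfl, hlen⟩ := hp.1.exists_eq_cons_append_singleton hp.2.1
  have hba : b ≤ a := by have := (mem_Tri1_iff.1 hp).2; omega
  rw [T1map_cons_append_singleton, psize_cons_append_singleton hlen,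
    psize_cons_append_singleton hlen]
  zify [hba]
  ring

theorem stmt4 : Set.BijOn T1map Tri1 M1 ∧ ∀ p ∈ Tri1, psize (T1map p) = psize p :=
  ⟨InvOn.bijOn ⟨leftInvOn_T1inv_T1map, rightInvOn_T1inv_T1map⟩ mapsTo_T1map_Tri1_M1
    mapsTo_T1inv_M1_Tri1, fun _ => psize_T1map⟩
end

section
/- The cylinder set △₀₀ ∩ P_{≥3} equals the set of partitions of dimension m ≥ 3 satisfying λ₁ < λ₂ + λ_m and 2λ₂ < λ₁ + λ₃; i.e., for λ of dimension ≥ 3, λ ∈ △₀ and T₀(λ) ∈ △₀ if and only if λ₁ < λ₂ + λ_m and 2λ₂ < λ₁ + λ₃. -/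
/-!
T₀ moves λ₂, …, λ_m to the front and appends λ₁ − λ₂, so T₀(λ) is again a partition exactly
when 0 < λ₁ − λ₂ < λ_m, which is the △₀ condition on λ. The △₀ condition on T₀(λ) reads
λ₂ < λ₃ + (λ₁ − λ₂), i.e. 2λ₂ < λ₁ + λ₃.
-/

open List

theorem partsLast_cons_cons (a b : ℕ) (t : List ℕ) :
    partsLast (a :: b :: t) = (b :: t).getLast (cons_ne_nil b t) := by
  simp [partsLast, getLastD_eq_getLast?, getLast?_eq_some_getLast]

theorem T0parts_cons_cons (a b : ℕ) (t : List ℕ) : T0parts (a :: b :: t) = b :: t ++ [a - b] :=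
  rfl

theorem partsLast_T0parts (a b : ℕ) (t : List ℕ) : partsLast (T0parts (a :: b :: t)) = a - b := by
  simp only [T0parts_cons_cons, partsLast, getLastD_concat]

theorem isPart_T0map {a b : ℕ} {t K : List ℕ} (hP : IsPart (a :: b :: t, K))
    (h : a < b + partsLast (a :: b :: t)) : IsPart (T0map (a :: b :: t, K)) := by
  obtain ⟨hlen, hchain, hparts, hmults⟩ := hP
  obtain ⟨k₁, k₂, s, rfl⟩ : ∃ k₁ k₂ s, K = k₁ :: k₂ :: s := by
    match K, hlen with
    | k₁ :: k₂ :: s, _ => exact ⟨k₁, k₂, s, rfl⟩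
  dsimp only at hlen hchain hparts hmults
  have hba : b < a := (isChain_cons_cons.1 hchain).1
  rw [partsLast_cons_cons] at h
  refine ⟨by simpa [T0map, T0parts, T0mults] using hlen, ?_, ?_, ?_⟩
  · refine hchain.tail.append (isChain_singleton _) ?_
    simp only [tail_cons, getLast?_eq_some_getLast (cons_ne_nil b t), Option.mem_def,
      Option.some.injEq, head?_cons]
    rintro _ rfl _ rfl
    omega
  · intro x hx
    simp only [T0map, T0parts_cons_cons, mem_append, mem_singleton] at hx
    rcases hx with hx | rfl
    · exact hparts x (mem_cons_of_mem a hx)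
    · omega
  · intro x hx
    simp only [T0map, T0mults, mem_cons, mem_append, not_mem_nil, or_false] at hx
    have hk₁ := hmults k₁ (by simp)
    rcases hx with rfl | hx | rfl
    · omega
    · exact hmults x (by simp [hx])
    · exact hk₁

theorem mem_Tri0_iff_of_isPart {a b : ℕ} {t K : List ℕ} (hP : IsPart (a :: b :: t, K)) :
    (a :: b :: t, K) ∈ Tri0 ↔ a < b + partsLast (a :: b :: t) := by
  simp [Tri0, hP, parts1, parts2]

theorem T0map_mem_Tri0_iff {a b c : ℕ} {t K : List ℕ} (hba : b < a) :
    T0map (a :: b :: c :: t, K) ∈ Tri0 ↔ IsPart (T0map (a :: b :: c :: t, K)) ∧ 2 * b < a + c := by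
  simp only [Tri0, Set.mem_ofPred_eq, T0map, partsLast_T0parts]
  refine and_congr_right fun _ => ?_
  simp only [T0parts_cons_cons, parts1, parts2, cons_append, length_cons, headD_cons, tail_cons]
  omega

theorem stmt9 (p : List ℕ × List ℕ) (hP : IsPart p) (hm : 3 ≤ p.1.length) :
    (p ∈ Tri0 ∧ T0map p ∈ Tri0) ↔
      (parts1 p.1 < parts2 p.1 + partsLast p.1 ∧
       2 * parts2 p.1 < parts1 p.1 + parts3 p.1) := by
  obtain ⟨L, K⟩ := p
  obtain ⟨a, b, c, t, rfl⟩ : ∃ a b c t, L = a :: b :: c :: t := by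
    match L, hm with
    | a :: b :: c :: t, _ => exact ⟨a, b, c, t, rfl⟩
  have hba : b < a := (isChain_cons_cons.1 hP.2.1).1
  rw [mem_Tri0_iff_of_isPart hP, T0map_mem_Tri0_iff hba]
  exact ⟨fun ⟨h₁, _, h₂⟩ => ⟨h₁, h₂⟩, fun ⟨h₁, h₂⟩ => ⟨h₁, isPart_T0map hP h₁, h₂⟩⟩
end

section
/- For each 0 ≤ p ≤ d, the p-th iterate T₁^p is a size-preserving bijection from △_d^G = {partitions with λ₁ − λ₂ − dλ_m > 0 > λ₁ − λ₂ − (d+1)λ_m} onto △_{d−p}^G ∩ {partitions with p·k₁ < k_m}. -/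
/-!
Write a partition of dimension `≥ 2` as `(a :: (M ++ [z]), k :: (N ++ [r]))`, so that `a = λ₁`,
`z = λ_m`, `k = k₁` and `r = k_m`. Then `T1map^[p]` only replaces `a` by `a - p z` and `r` by
`p k + r`. Subtracting `p λ_m` from `λ₁` moves the Gauss inequalities
`λ₂ + d λ_m < λ₁ < λ₂ + (d + 1) λ_m` from `d` to `d - p`, and the lower one keeps `λ₁ > λ₂`, so the
image is again a partition. The inverse adds `p z` to `a` and subtracts `p k` from `r`, which gives
a partition exactly when `p k < r`. The size changes by `z p k - p z k = 0`.
-/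

section Shape

variable {a k r z : ℕ} {M N : List ℕ}

lemma exists_eq_cons_append {q : List ℕ × List ℕ} (hlen : q.1.length = q.2.length)
    (h2 : 2 ≤ q.1.length) :
    ∃ a M z k N r, M.length = N.length ∧ q = (a :: (M ++ [z]), k :: (N ++ [r])) := by
  obtain ⟨_ | ⟨a, L⟩, _ | ⟨k, K⟩⟩ := q <;>
    simp only [List.length_nil, List.length_cons] at hlen h2 <;> try omega
  obtain rfl | ⟨M, z, rfl⟩ := L.eq_nil_or_concat
  · simp at h2
  obtain rfl | ⟨N, r, rfl⟩ := K.eq_nil_or_concat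
  · simp at hlen
  exact ⟨a, M, z, k, N, r, by simpa using hlen, by simp⟩

@[simp] lemma parts1_cons : parts1 (a :: M) = a := rfl

@[simp] lemma parts2_cons_append : parts2 (a :: (M ++ [z])) = (M ++ [z]).headD 0 := rfl

@[simp] lemma getLast?_cons_append : (a :: (M ++ [z])).getLast? = some z := by
  rw [← List.cons_append, List.getLast?_concat]

@[simp] lemma dropLast_cons_append : (a :: (M ++ [z])).dropLast = a :: M := by
  rw [← List.cons_append, List.dropLast_concat]

@[simp] lemma getLastD_cons_append : (a :: (M ++ [z])).getLastD 0 = z := by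
  simp [List.getLastD_eq_getLast?]

@[simp] lemma partsLast_cons_append : partsLast (a :: (M ++ [z])) = z :=
  getLastD_cons_append

lemma IsPart.update_head_getLast (h : IsPart (a :: (M ++ [z]), k :: (N ++ [r]))) {a' r' : ℕ}
    (ha : (M ++ [z]).headD 0 < a') (hr : 0 < r') :
    IsPart (a' :: (M ++ [z]), k :: (N ++ [r'])) := by
  obtain ⟨hlen, hchain, hparts, hmults⟩ := h
  refine ⟨by simpa using hlen, ?_, ?_, ?_⟩
  · obtain ⟨b, L, hbL⟩ := List.exists_cons_of_ne_nil (List.concat_ne_nil z M)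
    rw [hbL] at hchain ha ⊢
    exact List.isChain_cons_cons.2 ⟨ha, (List.isChain_cons_cons.1 hchain).2⟩
  · exact List.forall_mem_cons.2 ⟨Nat.zero_lt_of_lt ha, (List.forall_mem_cons.1 hparts).2⟩
  · simp only [List.forall_mem_cons, List.forall_mem_append] at hmults ⊢
    exact ⟨hmults.1, hmults.2.1, hr, List.forall_mem_nil _⟩

lemma mem_gaussSet_cons_append_iff {d : ℕ} :
    (a :: (M ++ [z]), k :: (N ++ [r])) ∈ GaussSet d ↔
      IsPart (a :: (M ++ [z]), k :: (N ++ [r])) ∧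
        (M ++ [z]).headD 0 + d * z < a ∧ a < (M ++ [z]).headD 0 + (d + 1) * z := by
  simp [GaussSet]

lemma T1map_cons_append :
    T1map (a :: (M ++ [z]), k :: (N ++ [r])) = ((a - z) :: (M ++ [z]), k :: (N ++ [k + r])) := by
  simp [T1map, T1parts, T1mults]

lemma T1map_iterate_cons_append (p : ℕ) :
    T1map^[p] (a :: (M ++ [z]), k :: (N ++ [r])) =
      ((a - p * z) :: (M ++ [z]), k :: (N ++ [p * k + r])) := by
  induction p with
  | zero => simp
  | succ p ih =>
    rw [Function.iterate_succ_apply', ih, T1map_cons_append, Nat.sub_sub]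
    congr 4 <;> ring

def T1mapIterateInv (p : ℕ) (q : List ℕ × List ℕ) : List ℕ × List ℕ :=
  ((parts1 q.1 + p * partsLast q.1) :: q.1.tail,
    q.2.dropLast ++ [q.2.getLastD 0 - p * q.2.headD 0])

lemma T1mapIterateInv_cons_append (p : ℕ) :
    T1mapIterateInv p (a :: (M ++ [z]), k :: (N ++ [r])) =
      ((a + p * z) :: (M ++ [z]), k :: (N ++ [r - p * k])) := by
  simp [T1mapIterateInv]

lemma psize_cons_append (hMN : M.length = N.length) :
    psize (a :: (M ++ [z]), k :: (N ++ [r])) = a * k + psize (M, N) + z * r := by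
  simp [psize, List.zipWith_append hMN, add_assoc]

lemma mul_le_of_cons_append_mem_gaussSet_add {e p : ℕ}
    (hq : (a :: (M ++ [z]), k :: (N ++ [r])) ∈ GaussSet (e + p)) : p * z ≤ a := by
  have hlo := (mem_gaussSet_cons_append_iff.1 hq).2.1
  rw [add_mul] at hlo
  omega

end Shape

section Iterate

variable (e p : ℕ)

lemma T1map_iterate_mapsTo :
    Set.MapsTo (T1map^[p]) (GaussSet (e + p))
      (GaussSet e ∩ {q | p * q.2.headD 0 < q.2.getLastD 0}) := by
  intro q hq
  obtain ⟨a, M, z, k, N, r, -, rfl⟩ := exists_eq_cons_append hq.1.1 hq.2.1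
  obtain ⟨hpart, hlo, hhi⟩ := mem_gaussSet_cons_append_iff.1 hq
  have hr : 0 < r := hpart.2.2.2 r (by simp)
  rw [T1map_iterate_cons_append]
  refine ⟨mem_gaussSet_cons_append_iff.2 ⟨hpart.update_head_getLast ?_ ?_, ?_, ?_⟩, ?_⟩ <;>
    simp only [Set.mem_ofPred_eq, List.headD_cons, getLastD_cons_append, add_mul, one_mul]
      at hlo hhi ⊢ <;>
    omega

lemma T1mapIterateInv_mapsTo :
    Set.MapsTo (T1mapIterateInv p) (GaussSet e ∩ {q | p * q.2.headD 0 < q.2.getLastD 0})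
      (GaussSet (e + p)) := by
  rintro q ⟨hq, hpk⟩
  obtain ⟨a, M, z, k, N, r, -, rfl⟩ := exists_eq_cons_append hq.1.1 hq.2.1
  obtain ⟨hpart, hlo, hhi⟩ := mem_gaussSet_cons_append_iff.1 hq
  rw [T1mapIterateInv_cons_append]
  simp only [Set.mem_ofPred_eq, List.headD_cons, getLastD_cons_append] at hpk
  refine mem_gaussSet_cons_append_iff.2 ⟨hpart.update_head_getLast ?_ ?_, ?_, ?_⟩ <;>
    simp only [add_mul, one_mul] at hlo hhi ⊢ <;>
    omega

lemma T1mapIterateInv_invOn :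
    Set.InvOn (T1mapIterateInv p) (T1map^[p]) (GaussSet (e + p))
      (GaussSet e ∩ {q | p * q.2.headD 0 < q.2.getLastD 0}) := by
  constructor
  · intro q hq
    obtain ⟨a, M, z, k, N, r, -, rfl⟩ := exists_eq_cons_append hq.1.1 hq.2.1
    have hpz := mul_le_of_cons_append_mem_gaussSet_add hq
    rw [T1map_iterate_cons_append, T1mapIterateInv_cons_append, Nat.sub_add_cancel hpz,
      Nat.add_sub_cancel_left]
  · rintro q ⟨hq, hpk⟩
    obtain ⟨a, M, z, k, N, r, -, rfl⟩ := exists_eq_cons_append hq.1.1 hq.2.1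
    simp only [Set.mem_ofPred_eq, List.headD_cons, getLastD_cons_append] at hpk
    rw [T1mapIterateInv_cons_append, T1map_iterate_cons_append, Nat.add_sub_cancel,
      Nat.add_sub_cancel' hpk.le]

lemma psize_T1map_iterate {q : List ℕ × List ℕ} (hq : q ∈ GaussSet (e + p)) :
    psize (T1map^[p] q) = psize q := by
  obtain ⟨a, M, z, k, N, r, hMN, rfl⟩ := exists_eq_cons_append hq.1.1 hq.2.1
  have hpz := mul_le_of_cons_append_mem_gaussSet_add hq
  rw [T1map_iterate_cons_append, psize_cons_append hMN, psize_cons_append hMN]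
  zify [hpz]
  ring

end Iterate

theorem stmt15 (d p : ℕ) (hpd : p ≤ d) :
    Set.BijOn (T1map^[p]) (GaussSet d)
      (GaussSet (d - p) ∩ {q | p * q.2.headD 0 < q.2.getLastD 0}) ∧
    ∀ q ∈ GaussSet d, psize (T1map^[p] q) = psize q := by
  obtain ⟨e, rfl⟩ := Nat.exists_eq_add_of_le' hpd
  rw [Nat.add_sub_cancel]
  exact ⟨(T1mapIterateInv_invOn e p).bijOn (T1map_iterate_mapsTo e p)
    (T1mapIterateInv_mapsTo e p), fun q hq => psize_T1map_iterate e p hq⟩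
end

section
/- For every positive integer n, the number of partitions of n into distinct parts equals 1 + E₀(n) + E₁(n) + E_D(n) + [3 | n], where E₀(n) counts partitions of n with k₁ = 2 and all other multiplicities 1, E₁(n) counts those with k_m = 2 and all other multiplicities 1, E_D(n) counts those with k₁ = k_m = 2 and all intermediate multiplicities 1 (dimension ≥ 2 in each case), and [3 | n] is 1 if 3 divides n and 0 otherwise. -/
/-
Write a partition of `n` into distinct parts as `λ₁ > λ₂ > ⋯ > λ_m` and compare `λ₁` with
`λ₂ + λ_m`. Dimension one contributes the partition `(n)`, and for `m = 2` equality forces the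
partition `(2n/3, n/3)`, which accounts for `[3 ∣ n]`. In the remaining cases the maps `T₀`,
`T₁`, `T_D` trade `λ₁` for a repeated part, keeping the size `n`. If `λ₁ < λ₂ + λ_m`, drop `λ₁`
and append `λ₁ - λ₂` as a new smallest part, so that `λ₂`, now the largest part, is counted
twice (`E₀`); if `λ₁ > λ₂ + λ_m`, replace `λ₁` by `λ₁ - λ_m`, so that `λ_m` is counted twice
(`E₁`); if `λ₁ = λ₂ + λ_m` and `m ≥ 3`, drop `λ₁`, so that both `λ₂` and `λ_m` are counted twice
(`E_D`). Each inverse puts `λ₁ + λ_m` back in front.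
-/

open List

namespace DistinctPartitions

@[simp] lemma parts1_cons (a : ℕ) (M : List ℕ) : parts1 (a :: M) = a := rfl

@[simp] lemma parts2_cons (a : ℕ) (M : List ℕ) : parts2 (a :: M) = parts1 M := rfl

@[simp] lemma parts1_append {M : List ℕ} (hM : M ≠ []) (N : List ℕ) :
    parts1 (M ++ N) = parts1 M := by
  obtain ⟨b, M, rfl⟩ := exists_cons_of_ne_nil hM
  rfl

@[simp] lemma partsLast_append_singleton (M : List ℕ) (x : ℕ) : partsLast (M ++ [x]) = x :=
  getLastD_concat

@[simp] lemma partsLast_cons (a : ℕ) {M : List ℕ} (hM : M ≠ []) :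
    partsLast (a :: M) = partsLast M := by
  obtain ⟨M, x, rfl⟩ := (eq_nil_or_concat' M).resolve_left hM
  rw [← cons_append, partsLast_append_singleton, partsLast_append_singleton]

lemma parts1_mem {M : List ℕ} (hM : M ≠ []) : parts1 M ∈ M := by
  obtain ⟨b, M, rfl⟩ := exists_cons_of_ne_nil hM
  exact mem_cons_self

lemma partsLast_mem {M : List ℕ} (hM : M ≠ []) : partsLast M ∈ M := by
  obtain ⟨M, x, rfl⟩ := (eq_nil_or_concat' M).resolve_left hM
  simp

lemma le_parts1 {L : List ℕ} (hL : L.Pairwise (· > ·)) {x : ℕ} (hx : x ∈ L) : x ≤ parts1 L := by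
  cases L with
  | nil => simp at hx
  | cons a M =>
    rcases mem_cons.1 hx with rfl | hx
    · rfl
    · exact ((pairwise_cons.1 hL).1 x hx).le

lemma partsLast_le {L : List ℕ} (hL : L.Pairwise (· > ·)) {x : ℕ} (hx : x ∈ L) :
    partsLast L ≤ x := by
  obtain ⟨M, y, rfl⟩ := (eq_nil_or_concat' L).resolve_left (ne_nil_of_mem hx)
  rcases mem_append.1 hx with hx | hx
  · simpa using ((pairwise_append.1 hL).2.2 x hx y (mem_singleton_self y)).le
  · simp_all

lemma exists_eq_cons_of_two_le_length {L : List ℕ} (h : 2 ≤ L.length) :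
    ∃ a M, M ≠ [] ∧ L = a :: M := by
  match L, h with
  | a :: b :: t, _ => exact ⟨a, b :: t, cons_ne_nil _ _, rfl⟩

lemma exists_eq_append_singleton_of_two_le_length {L : List ℕ} (h : 2 ≤ L.length) :
    ∃ M x, M ≠ [] ∧ L = M ++ [x] := by
  obtain ⟨M, x, rfl⟩ := (eq_nil_or_concat' L).resolve_left (ne_nil_of_length_pos (by omega))
  exact ⟨M, x, ne_nil_of_length_pos (by rw [length_append, length_singleton] at h; omega), rfl⟩

lemma exists_eq_cons_append_singleton {L : List ℕ} (h : 2 ≤ L.length) :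
    ∃ a M b, L = a :: (M ++ [b]) := by
  obtain ⟨a, M, hM, rfl⟩ := exists_eq_cons_of_two_le_length h
  obtain ⟨M, b, rfl⟩ := (eq_nil_or_concat' M).resolve_left hM
  exact ⟨a, M, b, rfl⟩

def IsDistinctParts (L : List ℕ) : Prop := L.Pairwise (· > ·) ∧ ∀ x ∈ L, 0 < x

lemma isDistinctParts_cons (a : ℕ) {M : List ℕ} (hM : M ≠ []) :
    IsDistinctParts (a :: M) ↔ parts1 M < a ∧ IsDistinctParts M := by
  unfold IsDistinctParts
  rw [pairwise_cons, forall_mem_cons]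
  constructor
  · rintro ⟨⟨hlt, hM'⟩, -, hpos⟩
    exact ⟨hlt _ (parts1_mem hM), hM', hpos⟩
  · rintro ⟨hlt, hM', hpos⟩
    exact ⟨⟨fun x hx => (le_parts1 hM' hx).trans_lt hlt, hM'⟩, by omega, hpos⟩

lemma isDistinctParts_append_singleton {M : List ℕ} (hM : M ≠ []) (x : ℕ) :
    IsDistinctParts (M ++ [x]) ↔ IsDistinctParts M ∧ 0 < x ∧ x < partsLast M := by
  unfold IsDistinctParts
  simp only [pairwise_append, pairwise_singleton, mem_singleton, forall_eq, true_and,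
    mem_append, or_imp, forall_and]
  constructor
  · rintro ⟨⟨hM', hgt⟩, hpos, hx⟩
    exact ⟨⟨hM', hpos⟩, hx, hgt _ (partsLast_mem hM)⟩
  · rintro ⟨⟨hM', hpos⟩, hx, hlt⟩
    exact ⟨⟨hM', fun y hy => hlt.trans_le (partsLast_le hM' hy)⟩, hpos, hx⟩

@[simp] lemma isDistinctParts_singleton (a : ℕ) : IsDistinctParts [a] ↔ 0 < a := by
  simp [IsDistinctParts]

def DistinctParts (n : ℕ) : Set (List ℕ) := {L | IsDistinctParts L ∧ L.sum = n}

/-- The lists of parts of the partitions of `n` of dimension at least two with multiplicities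
`k₁ = i + 1`, `k_m = j + 1` and all other multiplicities `1`. -/
def WeightedParts (i j n : ℕ) : Set (List ℕ) :=
  {L | IsDistinctParts L ∧ 2 ≤ L.length ∧ i * parts1 L + L.sum + j * partsLast L = n}

lemma distinctParts_finite (n : ℕ) : (DistinctParts n).Finite := by
  refine (range (n + 1)).reverse.sublists.toFinset.finite_toSet.subset ?_
  rintro L ⟨⟨hL, -⟩, rfl⟩
  have hsub : L ⊆ (range (L.sum + 1)).reverse := fun x hx => by
    simpa [Nat.lt_succ_iff] using le_sum_of_mem hx
  simpa using sublist_of_subperm_of_sortedGE (subperm_of_subset (hL.imp ne_of_gt) hsub)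
    hL.sortedGT.sortedGE (sortedGE_reverse.2 (sortedLT_range _).sortedLE)

lemma ncard_distinctParts {n : ℕ} (hn : 0 < n) :
    (DistinctParts n).ncard = 1 +
      {L ∈ DistinctParts n | 2 ≤ L.length ∧ parts1 L < parts2 L + partsLast L}.ncard +
      {L ∈ DistinctParts n | 2 ≤ L.length ∧ parts2 L + partsLast L < parts1 L}.ncard +
      {L ∈ DistinctParts n | 3 ≤ L.length ∧ parts1 L = parts2 L + partsLast L}.ncard +
      {L ∈ DistinctParts n | L.length = 2 ∧ parts1 L = parts2 L + partsLast L}.ncard := by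
  -- discharges the finiteness side conditions of `Set.ncard_union_eq` below
  have := (distinctParts_finite n).to_subtype
  have hsplit : DistinctParts n = {[n]} ∪
      {L ∈ DistinctParts n | 2 ≤ L.length ∧ parts1 L < parts2 L + partsLast L} ∪
      {L ∈ DistinctParts n | 2 ≤ L.length ∧ parts2 L + partsLast L < parts1 L} ∪
      {L ∈ DistinctParts n | 3 ≤ L.length ∧ parts1 L = parts2 L + partsLast L} ∪
      {L ∈ DistinctParts n | L.length = 2 ∧ parts1 L = parts2 L + partsLast L} := by
    ext L
    simp only [Set.mem_union, Set.mem_singleton_iff, Set.mem_ofPred_eq]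
    constructor
    · intro hL
      rcases L with _ | ⟨a, _ | ⟨b, t⟩⟩
      · exact absurd hL.2 (by rw [sum_nil]; omega)
      · left; simpa using hL.2
      · simp only [hL, true_and, length_cons]
        omega
    · rintro ((((rfl | h) | h) | h) | h)
      exacts [⟨(isDistinctParts_singleton n).2 hn, sum_singleton⟩, h.1, h.1, h.1, h.1]
  conv_lhs => rw [hsplit]
  rw [Set.ncard_union_eq, Set.ncard_union_eq, Set.ncard_union_eq, Set.ncard_union_eq,
    Set.ncard_singleton]
  all_goals
    refine Set.disjoint_left.2 fun L h₁ h₂ => ?_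
    simp only [Set.mem_union, Set.mem_sep_iff, Set.mem_singleton_iff] at h₁ h₂
    grind

lemma ncard_distinctParts_parts1_eq_of_length_two {n : ℕ} (hn : 0 < n) :
    {L ∈ DistinctParts n | L.length = 2 ∧ parts1 L = parts2 L + partsLast L}.ncard =
      if 3 ∣ n then 1 else 0 := by
  split_ifs with h
  · obtain ⟨b, rfl⟩ := h
    refine Set.ncard_eq_one.2 ⟨[2 * b, b], Set.ext fun L => ⟨?_, ?_⟩⟩
    · rintro ⟨⟨-, hsum⟩, hlen, heq⟩
      obtain ⟨x, y, rfl⟩ := length_eq_two.1 hlen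
      change x = y + y at heq
      rw [sum_pair] at hsum
      obtain rfl : y = b := by omega
      rw [heq, two_mul, Set.mem_singleton_iff]
    · rintro rfl
      refine ⟨⟨(isDistinctParts_cons _ (cons_ne_nil _ _)).2 ⟨?_, ?_⟩, ?_⟩, rfl, ?_⟩
      · change b < 2 * b
        omega
      · exact (isDistinctParts_singleton b).2 (by omega)
      · rw [sum_pair]
        ring
      · change 2 * b = b + b
        ring
  · convert Set.ncard_empty (List ℕ)
    refine Set.eq_empty_iff_forall_notMem.2 ?_
    rintro L ⟨⟨-, hsum⟩, hlen, heq⟩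
    obtain ⟨x, y, rfl⟩ := length_eq_two.1 hlen
    change x = y + y at heq
    rw [sum_pair] at hsum
    exact h ⟨y, by omega⟩

lemma T0parts_cons (a : ℕ) {M : List ℕ} (hM : M ≠ []) :
    T0parts (a :: M) = M ++ [a - parts1 M] := by
  obtain ⟨b, M, rfl⟩ := exists_cons_of_ne_nil hM
  rfl

def T0partsInv (N : List ℕ) : List ℕ := (parts1 N + partsLast N) :: N.dropLast

lemma ncard_distinctParts_parts1_lt (n : ℕ) :
    {L ∈ DistinctParts n | 2 ≤ L.length ∧ parts1 L < parts2 L + partsLast L}.ncard =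
      (WeightedParts 1 0 n).ncard := by
  refine (Set.InvOn.bijOn (f := T0parts) (f' := T0partsInv) ⟨?_, ?_⟩ ?_ ?_).ncard_eq
  · rintro _ ⟨⟨hL, -⟩, hlen, -⟩
    obtain ⟨a, M, hM, rfl⟩ := exists_eq_cons_of_two_le_length hlen
    have := ((isDistinctParts_cons a hM).1 hL).1
    simp only [T0partsInv, T0parts_cons a hM, parts1_append hM, partsLast_append_singleton,
      dropLast_concat, cons.injEq, and_true]
    omega
  · rintro _ ⟨-, hlen, -⟩
    obtain ⟨M, y, hM, rfl⟩ := exists_eq_append_singleton_of_two_le_length hlen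
    simp only [T0partsInv, T0parts_cons _ hM, parts1_append hM, partsLast_append_singleton,
      dropLast_concat, Nat.add_sub_cancel_left]
  · rintro _ ⟨⟨hL, hsum⟩, hlen, hlt⟩
    obtain ⟨a, M, hM, rfl⟩ := exists_eq_cons_of_two_le_length hlen
    rw [isDistinctParts_cons a hM] at hL
    simp only [parts1_cons, parts2_cons, partsLast_cons a hM, sum_cons] at hlt hsum
    rw [T0parts_cons a hM]
    refine ⟨(isDistinctParts_append_singleton hM _).2 ⟨hL.2, by omega, by omega⟩,
      by simp [Nat.one_le_iff_ne_zero, hM], ?_⟩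
    rw [parts1_append hM, sum_append, sum_singleton, partsLast_append_singleton]
    omega
  · rintro _ ⟨hN, hlen, hsum⟩
    obtain ⟨M, y, hM, rfl⟩ := exists_eq_append_singleton_of_two_le_length hlen
    rw [isDistinctParts_append_singleton hM] at hN
    simp only [parts1_append hM, partsLast_append_singleton, sum_append, sum_singleton] at hsum
    simp only [T0partsInv, parts1_append hM, partsLast_append_singleton, dropLast_concat]
    refine ⟨⟨(isDistinctParts_cons _ hM).2 ⟨by omega, hN.1⟩, by rw [sum_cons]; omega⟩,
      by simp [Nat.one_le_iff_ne_zero, hM], ?_⟩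
    rw [parts1_cons, parts2_cons, partsLast_cons _ hM]
    omega

lemma T1parts_cons (a : ℕ) {M : List ℕ} (hM : M ≠ []) :
    T1parts (a :: M) = (a - partsLast M) :: M := by
  simp [T1parts, hM]

def T1partsInv (N : List ℕ) : List ℕ := (parts1 N + partsLast N) :: N.tail

lemma ncard_distinctParts_parts1_gt (n : ℕ) :
    {L ∈ DistinctParts n | 2 ≤ L.length ∧ parts2 L + partsLast L < parts1 L}.ncard =
      (WeightedParts 0 1 n).ncard := by
  refine (Set.InvOn.bijOn (f := T1parts) (f' := T1partsInv) ⟨?_, ?_⟩ ?_ ?_).ncard_eq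
  · rintro _ ⟨-, hlen, hgt⟩
    obtain ⟨a, M, hM, rfl⟩ := exists_eq_cons_of_two_le_length hlen
    simp only [parts2_cons, partsLast_cons a hM, parts1_cons] at hgt
    simp only [T1partsInv, T1parts_cons a hM, parts1_cons, partsLast_cons _ hM, tail_cons,
      cons.injEq, and_true]
    omega
  · rintro _ ⟨-, hlen, -⟩
    obtain ⟨c, M, hM, rfl⟩ := exists_eq_cons_of_two_le_length hlen
    simp only [T1partsInv, parts1_cons, partsLast_cons c hM, tail_cons, T1parts_cons _ hM,
      Nat.add_sub_cancel]
  · rintro _ ⟨⟨hL, hsum⟩, hlen, hgt⟩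
    obtain ⟨a, M, hM, rfl⟩ := exists_eq_cons_of_two_le_length hlen
    rw [isDistinctParts_cons a hM] at hL
    simp only [parts1_cons, parts2_cons, partsLast_cons a hM, sum_cons] at hgt hsum
    rw [T1parts_cons a hM]
    refine ⟨(isDistinctParts_cons _ hM).2 ⟨by omega, hL.2⟩, hlen, ?_⟩
    simp only [parts1_cons, partsLast_cons _ hM, sum_cons]
    omega
  · rintro _ ⟨hN, hlen, hsum⟩
    obtain ⟨c, M, hM, rfl⟩ := exists_eq_cons_of_two_le_length hlen
    rw [isDistinctParts_cons c hM] at hN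
    simp only [parts1_cons, partsLast_cons c hM, sum_cons] at hsum
    simp only [T1partsInv, parts1_cons, partsLast_cons c hM, tail_cons]
    refine ⟨⟨(isDistinctParts_cons _ hM).2 ⟨by omega, hN.2⟩, by rw [sum_cons]; omega⟩,
      hlen, ?_⟩
    simp only [parts1_cons, parts2_cons, partsLast_cons _ hM]
    omega

def TDpartsInv (N : List ℕ) : List ℕ := (parts1 N + partsLast N) :: N

lemma ncard_distinctParts_parts1_eq (n : ℕ) :
    {L ∈ DistinctParts n | 3 ≤ L.length ∧ parts1 L = parts2 L + partsLast L}.ncard =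
      (WeightedParts 1 1 n).ncard := by
  refine (Set.InvOn.bijOn (f := TDparts) (f' := TDpartsInv) ⟨?_, fun _ _ => rfl⟩ ?_ ?_).ncard_eq
  · rintro L ⟨-, hlen, heq⟩
    obtain ⟨a, M, hM, rfl⟩ := exists_eq_cons_of_two_le_length (by omega : 2 ≤ L.length)
    simp only [parts1_cons, parts2_cons, partsLast_cons a hM] at heq
    simp only [TDpartsInv, TDparts, tail_cons, heq]
  · rintro L ⟨⟨hL, hsum⟩, hlen, heq⟩
    obtain ⟨a, M, hM, rfl⟩ := exists_eq_cons_of_two_le_length (by omega : 2 ≤ L.length)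
    simp only [parts1_cons, parts2_cons, partsLast_cons a hM, sum_cons] at heq hsum
    simp only [TDparts, tail_cons]
    refine ⟨((isDistinctParts_cons a hM).1 hL).2, by rw [length_cons] at hlen; omega, by omega⟩
  · rintro N ⟨hN, hlen, hsum⟩
    have hN0 : N ≠ [] := ne_nil_of_length_pos (by omega)
    have := hN.2 _ (partsLast_mem hN0)
    simp only [TDpartsInv]
    refine ⟨⟨(isDistinctParts_cons _ hN0).2 ⟨by omega, hN⟩, by rw [sum_cons]; omega⟩,
      by rw [length_cons]; omega, ?_⟩
    simp [hN0]

lemma ncard_eq_ncard_of_mem_iff {α β : Type*} {S : Set (α × β)} {T : Set α} (g : α → β)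
    (h : ∀ a b, (a, b) ∈ S ↔ a ∈ T ∧ b = g a) : S.ncard = T.ncard := by
  have hS : S = (fun a => (a, g a)) '' T := by
    ext ⟨a, b⟩
    simp [h, eq_comm]
  rw [hS, Set.ncard_image_of_injective _ fun _ _ h => congrArg Prod.fst h]

lemma isPart_iff {L K : List ℕ} :
    IsPart (L, K) ↔ IsDistinctParts L ∧ L.length = K.length ∧ ∀ k ∈ K, 0 < k :=
  ⟨fun ⟨hlen, hL, hpos, hK⟩ => ⟨⟨isChain_iff_pairwise.1 hL, hpos⟩, hlen, hK⟩,
    fun ⟨⟨hL, hpos⟩, hlen, hK⟩ => ⟨hlen, isChain_iff_pairwise.2 hL, hpos, hK⟩⟩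

lemma psize_replicate_one (L : List ℕ) : psize (L, replicate L.length 1) = L.sum := by
  induction L with
  | nil => rfl
  | cons a L ih => simpa [psize, replicate_succ] using ih

lemma ncard_pairs_distinct (n : ℕ) :
    {p : List ℕ × List ℕ | IsPart p ∧ psize p = n ∧ ∀ k ∈ p.2, k = 1}.ncard =
      (DistinctParts n).ncard := by
  refine ncard_eq_ncard_of_mem_iff (fun L => replicate L.length 1) fun L K => ?_
  simp only [Set.mem_ofPred_eq, isPart_iff]
  constructor
  · rintro ⟨⟨hL, hlen, -⟩, hsize, hK⟩
    obtain rfl : K = replicate L.length 1 := eq_replicate_iff.2 ⟨hlen.symm, hK⟩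
    exact ⟨⟨hL, psize_replicate_one L ▸ hsize⟩, rfl⟩
  · rintro ⟨⟨hL, hsum⟩, rfl⟩
    refine ⟨⟨hL, by simp, by simp⟩, psize_replicate_one L ▸ hsum, by simp⟩

def endpointMults (h t m : ℕ) : List ℕ := h :: (replicate (m - 2) 1 ++ [t])

lemma psize_endpointMults (i j : ℕ) {L : List ℕ} (hL : 2 ≤ L.length) :
    psize (L, endpointMults (i + 1) (j + 1) L.length) =
      i * parts1 L + L.sum + j * partsLast L := by
  obtain ⟨a, M, b, rfl⟩ := exists_eq_cons_append_singleton hL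
  have hM := psize_replicate_one M
  rw [psize] at hM
  have hlen : (a :: (M ++ [b])).length - 2 = M.length := by simp
  rw [endpointMults, hlen, psize, zipWith_cons_cons, zipWith_append length_replicate.symm,
    partsLast_cons a (by simp), partsLast_append_singleton]
  simp only [sum_cons, sum_append, hM, zipWith_cons_cons, zipWith_nil_left, sum_nil, parts1_cons]
  ring

lemma headD_eq_two_and_tail_eq_one_iff {K : List ℕ} (hK : 2 ≤ K.length) :
    (K.headD 0 = 2 ∧ ∀ k ∈ K.tail, k = 1) ↔ K = endpointMults 2 1 K.length := by
  obtain ⟨a, M, b, rfl⟩ := exists_eq_cons_append_singleton hK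
  simp [endpointMults, eq_replicate_iff, or_imp, forall_and]

lemma getLastD_eq_two_and_dropLast_eq_one_iff {K : List ℕ} (hK : 2 ≤ K.length) :
    (K.getLastD 0 = 2 ∧ ∀ k ∈ K.dropLast, k = 1) ↔ K = endpointMults 1 2 K.length := by
  obtain ⟨a, M, b, rfl⟩ := exists_eq_cons_append_singleton hK
  rw [← cons_append, getLastD_concat, dropLast_concat]
  simp [endpointMults, eq_replicate_iff, and_comm, and_left_comm]

lemma headD_getLastD_eq_two_iff {K : List ℕ} (hK : 2 ≤ K.length) :
    (K.headD 0 = 2 ∧ K.getLastD 0 = 2 ∧ ∀ k ∈ K.tail.dropLast, k = 1) ↔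
      K = endpointMults 2 2 K.length := by
  obtain ⟨a, M, b, rfl⟩ := exists_eq_cons_append_singleton hK
  rw [← cons_append, getLastD_concat]
  simp [endpointMults, eq_replicate_iff, and_comm]

lemma ncard_pairs_endpointMults (i j n : ℕ) {P : List ℕ → Prop}
    (hP : ∀ K, 2 ≤ K.length → (P K ↔ K = endpointMults (i + 1) (j + 1) K.length)) :
    {p : List ℕ × List ℕ | IsPart p ∧ 2 ≤ p.1.length ∧ psize p = n ∧ P p.2}.ncard =
      (WeightedParts i j n).ncard := by
  refine ncard_eq_ncard_of_mem_iff (fun L => endpointMults (i + 1) (j + 1) L.length)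
    fun L K => ?_
  simp only [Set.mem_ofPred_eq, isPart_iff]
  constructor
  · rintro ⟨⟨hL, hlen, -⟩, hL2, hsize, hPK⟩
    rw [hP K (hlen ▸ hL2), ← hlen] at hPK
    subst hPK
    exact ⟨⟨hL, hL2, psize_endpointMults i j hL2 ▸ hsize⟩, rfl⟩
  · rintro ⟨⟨hL, hL2, hsum⟩, rfl⟩
    have hlen : (endpointMults (i + 1) (j + 1) L.length).length = L.length := by
      rw [endpointMults, length_cons, length_append, length_replicate, length_singleton]
      omega
    refine ⟨⟨hL, hlen.symm, ?_⟩, hL2, psize_endpointMults i j hL2 ▸ hsum, ?_⟩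
    · simp [endpointMults, or_imp, forall_and]
    · rw [hP _ (by rw [hlen]; exact hL2), hlen]

end DistinctPartitions

open DistinctPartitions

theorem stmt17 (n : ℕ) (hn : 0 < n) :
    {p : List ℕ × List ℕ | IsPart p ∧ psize p = n ∧ ∀ k ∈ p.2, k = 1}.ncard =
      1 +
      {p : List ℕ × List ℕ | IsPart p ∧ 2 ≤ p.1.length ∧ psize p = n ∧
        p.2.headD 0 = 2 ∧ ∀ k ∈ p.2.tail, k = 1}.ncard +
      {p : List ℕ × List ℕ | IsPart p ∧ 2 ≤ p.1.length ∧ psize p = n ∧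
        p.2.getLastD 0 = 2 ∧ ∀ k ∈ p.2.dropLast, k = 1}.ncard +
      {p : List ℕ × List ℕ | IsPart p ∧ 2 ≤ p.1.length ∧ psize p = n ∧
        p.2.headD 0 = 2 ∧ p.2.getLastD 0 = 2 ∧ ∀ k ∈ p.2.tail.dropLast, k = 1}.ncard +
      (if 3 ∣ n then 1 else 0) := by
  rw [ncard_pairs_distinct, ncard_distinctParts hn, ncard_distinctParts_parts1_lt,
    ncard_distinctParts_parts1_gt, ncard_distinctParts_parts1_eq,
    ncard_distinctParts_parts1_eq_of_length_two hn,
    ncard_pairs_endpointMults 1 0 n fun _ => headD_eq_two_and_tail_eq_one_iff,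
    ncard_pairs_endpointMults 0 1 n fun _ => getLastD_eq_two_and_dropLast_eq_one_iff,
    ncard_pairs_endpointMults 1 1 n fun _ => headD_getLastD_eq_two_iff]
end
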